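/- arXiv:2110.03600 — 5 statements merged into one kernel-verified Lean document; each statement's English description precedes it below -/
import Mathlib

section
/- Let k ≤ n be positive integers and X a k × n matrix with non-negative real entries. Assume all rows of X have the same sum, each column of X sums to at most 1, and at least k columns each sum to exactly 1. Then there exists an injective function π : [k] → [n] such that x_{j,π(j)} > 0 for all j ∈ [k]. -/
open Finset

/-- The standard simplex Δ^{k-1} ⊆ ℝ^k. -/
def simplex (k : ℕ) : Set (Fin k → ℝ) := stdSimplex ℝ (Fin k)

/-- The face of Δ^{k-1} spanned by the vertices in `S`. -/
def face {k : ℕ} (S : Finset (Fin k)) : Set (Fin k → ℝ) :=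
  {x | x ∈ simplex k ∧ ∀ j ∉ S, x j = 0}

/-- The facet of Δ^{k-1} opposite vertex `j`. -/
def facet {k : ℕ} (j : Fin k) : Set (Fin k → ℝ) := {x | x ∈ simplex k ∧ x j = 0}

/-- A tuple `A` is a KKM cover if every face is covered by the sets indexed by its vertices. -/
def IsKKM {k : ℕ} (A : Fin k → Set (Fin k → ℝ)) : Prop :=
  ∀ S : Finset (Fin k), S.Nonempty → face S ⊆ ⋃ j ∈ S, A j

/-- A tuple `A` is a dual KKM cover of Δ^{k-1}. -/
def IsDualKKM {k : ℕ} (A : Fin k → Set (Fin k → ℝ)) : Prop :=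
  (∀ j, IsClosed (A j) ∧ A j ⊆ simplex k) ∧ (simplex k ⊆ ⋃ j, A j) ∧
    ∀ j j', j ≠ j' → A j ∩ facet j' ⊆ facet j ∩ facet j'

/-!
If every row sums to `c` and `k` columns sum to `1`, then `k * c` (the total mass) is at least `k`,
so `c ≥ 1`. A set `s` of rows then carries mass at least `#s`, all of it sitting in the columns
where some row of `s` is positive; each of these columns holds mass at most `1`, so there are at
least `#s` of them. This is Hall's condition for the bipartite graph of positive entries.
-/

lemma card_filter_eq_one_le_sum {α : Type*} [Fintype α] (f : α → ℝ) (hf : ∀ i, 0 ≤ f i) :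
    (#{i | f i = 1} : ℝ) ≤ ∑ i, f i :=
  calc (#{i | f i = 1} : ℝ) = ∑ i with f i = 1, f i := by
        rw [sum_congr rfl fun i hi => (mem_filter.mp hi).2]; simp
    _ ≤ ∑ i, f i := sum_le_sum_of_subset_of_nonneg (filter_subset _ _) fun i _ _ => hf i

section Hall

variable {ι α : Type*} [Fintype ι] [Fintype α] [DecidableEq α] {X : ι → α → ℝ}

lemma card_le_card_biUnion_pos (hpos : ∀ j i, 0 ≤ X j i) (hrow : ∀ j, 1 ≤ ∑ i, X j i)
    (hcol : ∀ i, ∑ j, X j i ≤ 1) (s : Finset ι) :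
    #s ≤ #(s.biUnion fun j => {i | 0 < X j i}) := by
  set N := s.biUnion fun j => {i | 0 < X j i}
  have hvanish : ∀ i ∉ N, ∑ j ∈ s, X j i = 0 := fun i hi =>
    sum_eq_zero fun j hj => le_antisymm
      (not_lt.mp fun hji => hi (mem_biUnion.mpr ⟨j, hj, by simpa using hji⟩)) (hpos j i)
  have : (#s : ℝ) ≤ #N :=
    calc (#s : ℝ) = ∑ _j ∈ s, (1 : ℝ) := by simp
      _ ≤ ∑ j ∈ s, ∑ i, X j i := sum_le_sum fun j _ => hrow j
      _ = ∑ i, ∑ j ∈ s, X j i := sum_comm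
      _ = ∑ i ∈ N, ∑ j ∈ s, X j i :=
        (sum_subset (subset_univ N) fun i _ hi => hvanish i hi).symm
      _ ≤ ∑ _i ∈ N, (1 : ℝ) := sum_le_sum fun i _ =>
        (sum_le_sum_of_subset_of_nonneg (subset_univ s) fun j _ _ => hpos j i).trans (hcol i)
      _ = #N := by simp
  exact_mod_cast this

theorem exists_injective_forall_pos (hpos : ∀ j i, 0 ≤ X j i) (hrow : ∀ j, 1 ≤ ∑ i, X j i)
    (hcol : ∀ i, ∑ j, X j i ≤ 1) :
    ∃ π : ι → α, Function.Injective π ∧ ∀ j, 0 < X j (π j) := by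
  classical
  obtain ⟨π, hπ, hmem⟩ := (all_card_le_biUnion_card_iff_exists_injective _).mp
    (card_le_card_biUnion_pos hpos hrow hcol)
  exact ⟨π, hπ, fun j => by simpa using hmem j⟩

end Hall

theorem stmt0_general (k n : ℕ) (hk : 0 < k) (X : Fin k → Fin n → ℝ)
    (hpos : ∀ j i, 0 ≤ X j i)
    (hrow : ∃ c, ∀ j, ∑ i, X j i = c)
    (hcol : ∀ i, ∑ j, X j i ≤ 1)
    (hones : k ≤ (univ.filter fun i => ∑ j, X j i = 1).card) :
    ∃ π : Fin k → Fin n, Function.Injective π ∧ ∀ j, 0 < X j (π j) := by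
  obtain ⟨c, hc⟩ := hrow
  have htotal : (k : ℝ) * 1 ≤ k * c :=
    calc (k : ℝ) * 1 ≤ #{i | ∑ j, X j i = 1} := by rw [mul_one]; exact_mod_cast hones
      _ ≤ ∑ i, ∑ j, X j i := card_filter_eq_one_le_sum _ fun i => sum_nonneg fun j _ => hpos j i
      _ = k * c := by rw [sum_comm]; simp [hc]
  have hc1 : 1 ≤ c := le_of_mul_le_mul_left htotal (by exact_mod_cast hk)
  exact exists_injective_forall_pos hpos (fun j => (hc j).symm ▸ hc1) hcol

theorem stmt0 (k n : ℕ) (hk : 0 < k) (hkn : k ≤ n) (X : Fin k → Fin n → ℝ)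
    (hpos : ∀ j i, 0 ≤ X j i)
    (hrow : ∃ c, ∀ j, ∑ i, X j i = c)
    (hcol : ∀ i, ∑ j, X j i ≤ 1)
    (hones : k ≤ (univ.filter fun i => ∑ j, X j i = 1).card) :
    ∃ π : Fin k → Fin n, Function.Injective π ∧ ∀ j, 0 < X j (π j) :=
  stmt0_general k n hk X hpos hrow hcol hones
end

section
/- Let k ≤ r ≤ n be positive integers and X a k × n matrix with non-negative entries such that all rows have the same sum, every column sums to at most 1, and at least r columns sum to exactly 1. Then for every subset C ⊆ [n] with |C| = ⌈(r−k)/k⌉ there exists an injective function π : [k] → [n] \ C such that x_{j,π(j)} > 0 for all j ∈ [k]. -/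
open Finset

/-!
By Hall's theorem it suffices that every nonempty set `s` of rows has at least `|s| + |C|`
columns meeting it in a positive entry. The columns of sum one carry mass at least `r`, so the
common row sum is at least `r / k`; since each column carries mass at most one, the rows of `s`
meet at least `|s| r / k = |s| + |s| (r - k) / k ≥ |s| + (r - k) / k` columns.
-/

section

variable {ι κ : Type*} [Fintype κ]

noncomputable def colSupport (X : ι → κ → ℝ) (s : Finset ι) : Finset κ :=
  {i | ∃ j ∈ s, 0 < X j i}

@[simp]
lemma mem_colSupport {X : ι → κ → ℝ} {s : Finset ι} {i : κ} :
    i ∈ colSupport X s ↔ ∃ j ∈ s, 0 < X j i := by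
  simp [colSupport]

variable [Fintype ι]

lemma card_filter_sum_eq_one_le_sum {X : ι → κ → ℝ} (hpos : ∀ j i, 0 ≤ X j i) :
    (#{i | ∑ j, X j i = 1} : ℝ) ≤ ∑ j, ∑ i, X j i := by
  rw [sum_comm, card_filter]
  push_cast
  gcongr with i
  split_ifs with h
  · exact h.ge
  · exact sum_nonneg fun j _ => hpos j i

lemma sum_sum_le_card_colSupport {X : ι → κ → ℝ} (hpos : ∀ j i, 0 ≤ X j i)
    (hcol : ∀ i, ∑ j, X j i ≤ 1) (s : Finset ι) :
    ∑ j ∈ s, ∑ i, X j i ≤ #(colSupport X s) := by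
  calc ∑ j ∈ s, ∑ i, X j i = ∑ i ∈ colSupport X s, ∑ j ∈ s, X j i := by
        rw [sum_comm, colSupport]
        refine (sum_filter_of_ne fun i _ h => ?_).symm
        obtain ⟨j, hj, hne⟩ := exists_ne_zero_of_sum_ne_zero h
        exact ⟨j, hj, (hpos j i).lt_of_ne' hne⟩
    _ ≤ ∑ i ∈ colSupport X s, ∑ j, X j i := by
        gcongr with i
        · exact fun j _ _ => hpos j i
        · exact subset_univ s
    _ ≤ ∑ i ∈ colSupport X s, (1 : ℝ) := sum_le_sum fun i _ => hcol i
    _ = #(colSupport X s) := by simp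

lemma card_mul_le_card_mul_card_colSupport {X : ι → κ → ℝ} (hpos : ∀ j i, 0 ≤ X j i) {c : ℝ}
    (hrow : ∀ j, ∑ i, X j i = c) (hcol : ∀ i, ∑ j, X j i ≤ 1) (s : Finset ι) :
    #s * #{i | ∑ j, X j i = 1} ≤ Fintype.card ι * #(colSupport X s) := by
  have hmass := card_filter_sum_eq_one_le_sum hpos
  have hsupp := sum_sum_le_card_colSupport hpos hcol s
  simp only [hrow, sum_const, card_univ, nsmul_eq_mul] at hmass hsupp
  have : (#s * #{i | ∑ j, X j i = 1} : ℝ) ≤ Fintype.card ι * #(colSupport X s) :=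
    calc (#s * #{i | ∑ j, X j i = 1} : ℝ) ≤ #s * (Fintype.card ι * c) := by gcongr
      _ = Fintype.card ι * (#s * c) := by ring
      _ ≤ Fintype.card ι * #(colSupport X s) := by gcongr
  exact_mod_cast this

end

lemma add_ceil_sub_div_le {k r m N : ℕ} (hk : 0 < k) (hkr : k ≤ r) (hm : 1 ≤ m)
    (h : m * r ≤ k * N) : (m : ℤ) + ⌈((r : ℚ) - k) / k⌉ ≤ N := by
  rw [← le_sub_iff_add_le', Int.ceil_le, div_le_iff₀ (by exact_mod_cast hk)]
  have h' : (m : ℚ) * r ≤ k * N := by exact_mod_cast h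
  have hkr' : (k : ℚ) ≤ r := by exact_mod_cast hkr
  have hm' : (1 : ℚ) ≤ m := by exact_mod_cast hm
  push_cast
  nlinarith [mul_nonneg (sub_nonneg.2 hm') (sub_nonneg.2 hkr')]

lemma card_le_card_biUnion_pos_notMem {k n : ℕ} {X : Fin k → Fin n → ℝ} (hpos : ∀ j i, 0 ≤ X j i)
    {c : ℝ} (hrow : ∀ j, ∑ i, X j i = c) (hcol : ∀ i, ∑ j, X j i ≤ 1) {r : ℕ} (hkr : k ≤ r)
    (hones : r ≤ #{i | ∑ j, X j i = 1}) {C : Finset (Fin n)} (hC : #C = ⌈((r : ℚ) - k) / k⌉)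
    (s : Finset (Fin k)) : #s ≤ #(s.biUnion fun j => {i | i ∉ C ∧ 0 < X j i}) := by
  obtain rfl | hs := s.eq_empty_or_nonempty
  · exact Nat.zero_le _
  have hcount : #s * r ≤ k * #(colSupport X s) := by
    simpa using (Nat.mul_le_mul_left _ hones).trans
      (card_mul_le_card_mul_card_colSupport hpos hrow hcol s)
  have hk : 0 < k := Fin.pos hs.choose
  have hsupp : #s + #C ≤ #(colSupport X s) := by
    have := add_ceil_sub_div_le hk hkr hs.card_pos hcount
    rw [← hC] at this
    exact_mod_cast this
  have hsub : colSupport X s \ C ⊆ s.biUnion fun j => {i | i ∉ C ∧ 0 < X j i} := by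
    intro i hi
    simp only [mem_sdiff, mem_colSupport] at hi
    obtain ⟨⟨j, hj, hji⟩, hiC⟩ := hi
    exact mem_biUnion.2 ⟨j, hj, by simp [hiC, hji]⟩
  calc #s ≤ #(colSupport X s) - #C := by omega
    _ ≤ #(colSupport X s \ C) := le_card_sdiff C _
    _ ≤ _ := card_le_card hsub

theorem stmt2_general (k r n : ℕ) (hkr : k ≤ r)
    (X : Fin k → Fin n → ℝ)
    (hpos : ∀ j i, 0 ≤ X j i)
    (hrow : ∃ c, ∀ j, ∑ i, X j i = c)
    (hcol : ∀ i, ∑ j, X j i ≤ 1)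
    (hones : r ≤ (univ.filter fun i => ∑ j, X j i = 1).card)
    (C : Finset (Fin n)) (hC : C.card = ⌈((r : ℚ) - k) / k⌉) :
    ∃ π : Fin k → Fin n, Function.Injective π ∧ ∀ j, π j ∉ C ∧ 0 < X j (π j) := by
  obtain ⟨c, hrow⟩ := hrow
  obtain ⟨π, hinj, hπ⟩ := (all_card_le_biUnion_card_iff_exists_injective _).mp
    (card_le_card_biUnion_pos_notMem hpos hrow hcol hkr hones hC)
  exact ⟨π, hinj, fun j => by simpa using hπ j⟩

theorem stmt2 (k r n : ℕ) (hk : 0 < k) (hkr : k ≤ r) (hrn : r ≤ n)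
    (X : Fin k → Fin n → ℝ)
    (hpos : ∀ j i, 0 ≤ X j i)
    (hrow : ∃ c, ∀ j, ∑ i, X j i = c)
    (hcol : ∀ i, ∑ j, X j i ≤ 1)
    (hones : r ≤ (univ.filter fun i => ∑ j, X j i = 1).card)
    (C : Finset (Fin n)) (hC : C.card = ⌈((r : ℚ) - k) / k⌉) :
    ∃ π : Fin k → Fin n, Function.Injective π ∧ ∀ j, π j ∉ C ∧ 0 < X j (π j) :=
  stmt2_general k r n hkr X hpos hrow hcol hones C hC
end

section
/- Colorful KKM theorem (Gale): if for each i ∈ [k], (A^i_1, …, A^i_k) is a KKM cover of Δ^{k−1} by closed sets, then there exists a permutation π of [k] such that ⋂_{j=1}^k A^{π(j)}_j ≠ ∅. -/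
/-!
Iterate the barycentric subdivision of `Δ^{k-1}`. A vertex `v` of the `(N + 1)`-st subdivision is a
set of vertices of the `N`-th one; it is coloured with the cover `A ((#v - 1) mod k)`, i.e. it
receives a colour `j` in its support such that its position lies in `A ((#v - 1) mod k) j`, which
the KKM property permits. This is a Sperner labelling, so by the parity count of doors face by face
some cell is rainbow. The vertices of a cell form a flag, so they have the `k` sizes `1, …, k`;
hence the colours define a permutation `π` with `A (π j) j` containing a vertex of that cell for
every `j`. The cells shrink geometrically, and a Lebesgue number argument over the finitely many
permutations, using that the sets are closed, yields a point of `⋂ j, A (π j) j`.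
-/

open Finset

structure IsFlag {α : Type*} (d : Finset α) (c : Finset (Finset α)) : Prop where
  card_eq : #c = #d
  subset : ∀ F ∈ c, F ⊆ d
  nonempty : ∀ F ∈ c, F.Nonempty
  chain : IsChain (· ⊆ ·) (c : Set (Finset α))

namespace IsFlag

variable {α : Type*} {d e F G R v : Finset α} {c c' f : Finset (Finset α)}

theorem subset_of_card_le (h : IsFlag d c) (hF : F ∈ c) (hG : G ∈ c) (hFG : #F ≤ #G) :
    F ⊆ G :=
  (h.chain.total hF hG).elim id fun hGF => (eq_of_subset_of_card_le hGF hFG).ge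

theorem eq_of_card_eq (h : IsFlag d c) (hF : F ∈ c) (hG : G ∈ c) (hFG : #F = #G) : F = G :=
  (h.subset_of_card_le hF hG hFG.le).antisymm (h.subset_of_card_le hG hF hFG.ge)

theorem card_mem_Icc (h : IsFlag d c) (hF : F ∈ c) : #F ∈ Icc 1 #d :=
  mem_Icc.2 ⟨card_pos.2 (h.nonempty F hF), card_le_card (h.subset F hF)⟩

theorem image_card (h : IsFlag d c) : c.image card = Icc 1 #d := by
  refine eq_of_subset_of_card_le (fun n hn => ?_) ?_
  · obtain ⟨F, hF, rfl⟩ := mem_image.1 hn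
    exact h.card_mem_Icc hF
  · rw [card_image_of_injOn fun F hF G hG => h.eq_of_card_eq hF hG, h.card_eq, Nat.card_Icc,
      Nat.add_sub_cancel]

theorem exists_card (h : IsFlag d c) {n : ℕ} (h1 : 1 ≤ n) (h2 : n ≤ #d) : ∃ F ∈ c, #F = n := by
  simpa using h.image_card.ge (mem_Icc.2 ⟨h1, h2⟩)

theorem top_mem (h : IsFlag d c) (hd : d.Nonempty) : d ∈ c := by
  obtain ⟨F, hF, hFd⟩ := h.exists_card (card_pos.2 hd) le_rfl
  rwa [eq_of_subset_of_card_le (h.subset F hF) hFd.ge] at hF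

theorem sup_sup {β : Type*} [SemilatticeSup β] [OrderBot β] (h : IsFlag d c) (g : α → β) :
    c.sup (fun F => F.sup g) = d.sup g := by
  refine le_antisymm (Finset.sup_le fun F hF => sup_mono (h.subset F hF)) ?_
  rcases d.eq_empty_or_nonempty with rfl | hd
  · simp
  · exact le_sup (f := fun F => F.sup g) (h.top_mem hd)

theorem notMem_of_card_lt (h : IsFlag d c) (hF : #d < #F) : F ∉ c := fun hFc =>
  (card_le_card (h.subset F hFc)).not_gt hF

theorem subset_of_subset (hc : IsFlag d c) (hf : IsFlag e f) (hfc : f ⊆ c) : e ⊆ d := by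
  rcases e.eq_empty_or_nonempty with rfl | he
  · exact empty_subset d
  · exact hc.subset e (hfc (hf.top_mem he))

variable [DecidableEq α]

theorem insert_top (h : IsFlag e f) (hed : e ⊆ d) (hcard : #e + 1 = #d) :
    IsFlag d (insert d f) := by
  have hdf : d ∉ f := h.notMem_of_card_lt (by omega)
  have hsub : ∀ F ∈ insert d f, F ⊆ d := by
    simpa using fun F hF => (h.subset F hF).trans hed
  refine ⟨by rw [card_insert_of_notMem hdf, h.card_eq, hcard], hsub, ?_, ?_⟩
  · simpa using ⟨card_pos.1 (by omega), h.nonempty⟩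
  · rw [coe_insert]
    exact h.chain.insert fun F hF _ => Or.inr (hsub F (mem_insert_of_mem hF))

theorem erase_top (h : IsFlag d c) (hd : d.Nonempty) :
    ∃ e ⊆ d, #e + 1 = #d ∧ IsFlag e (c.erase d) := by
  have below : ∀ F ∈ c, F ≠ d → #F + 1 ≤ #d := fun F hF hFd =>
    card_lt_card (ssubset_of_subset_of_ne (h.subset F hF) hFd)
  obtain ⟨e, he, hed, hbelow⟩ : ∃ e, #e + 1 = #d ∧ e ⊆ d ∧ ∀ F ∈ c, F ≠ d → F ⊆ e := by
    rcases Nat.lt_or_ge 1 #d with h2 | h1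
    · obtain ⟨e, hec, he⟩ := h.exists_card (n := #d - 1) (by omega) (by omega)
      exact ⟨e, by omega, h.subset e hec, fun F hF hFd =>
        h.subset_of_card_le hF hec (by have := below F hF hFd; omega)⟩
    · refine ⟨∅, by rw [card_empty]; have := card_pos.2 hd; omega, empty_subset _,
        fun F hF hFd => ?_⟩
      have := below F hF hFd
      have := card_pos.2 (h.nonempty F hF)
      omega
  refine ⟨e, hed, he, ⟨?_, fun F hF => hbelow F (mem_of_mem_erase hF) (ne_of_mem_erase hF),
    fun F hF => h.nonempty F (mem_of_mem_erase hF), h.chain.mono (coe_subset.2 (erase_subset d c))⟩⟩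
  rw [card_erase_of_mem (h.top_mem hd), h.card_eq]
  omega

theorem eq_insert_top (hc : IsFlag d c) (hf : IsFlag e f) (hfc : f ⊆ c) (hcard : #e + 1 = #d) :
    c = insert d f := by
  have hdf : d ∉ f := hf.notMem_of_card_lt (by omega)
  refine (eq_of_subset_of_card_le (insert_subset (hc.top_mem (card_pos.1 (by omega))) hfc) ?_).symm
  rw [card_insert_of_notMem hdf, hc.card_eq, hf.card_eq, hcard]

theorem notMem_erase_of_card_eq (h : IsFlag d c) (hv : v ∈ c) (hR : #R = #v) :
    R ∉ c.erase v := fun hRc =>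
  ne_of_mem_erase hRc (h.eq_of_card_eq (mem_of_mem_erase hRc) hv hR)

theorem exchange (h : IsFlag d c) (hv : v ∈ c) (hRd : R ⊆ d) (hR : #R = #v)
    (hlow : ∀ F ∈ c, #F < #v → F ⊆ R) (hhigh : ∀ F ∈ c, #v < #F → R ⊆ F) :
    IsFlag d (insert R (c.erase v)) := by
  refine ⟨?_, ?_, ?_, ?_⟩
  · rw [card_insert_of_notMem (h.notMem_erase_of_card_eq hv hR), card_erase_add_one hv,
      h.card_eq]
  · simpa using ⟨hRd, fun F _ hF => h.subset F hF⟩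
  · intro F hF
    rcases mem_insert.1 hF with rfl | hF
    · exact card_pos.1 (hR ▸ card_pos.2 (h.nonempty v hv))
    · exact h.nonempty F (mem_of_mem_erase hF)
  · rw [coe_insert]
    refine (h.chain.mono (coe_subset.2 (erase_subset v c))).insert fun F hF _ => ?_
    obtain ⟨hFv, hFc⟩ := mem_erase.1 hF
    rcases lt_or_gt_of_ne fun hcard => hFv (h.eq_of_card_eq hFc hv hcard) with hlt | hgt
    · exact Or.inr (hlow F hFc hlt)
    · exact Or.inl (hhigh F hFc hgt)

theorem exists_eq_insert_erase (h : IsFlag d c) (h' : IsFlag d c') (hv : v ∈ c)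
    (hsub : c.erase v ⊆ c') : ∃ R ∈ c', #R = #v ∧ c' = insert R (c.erase v) := by
  obtain ⟨hv1, hvd⟩ := mem_Icc.1 (h.card_mem_Icc hv)
  obtain ⟨R, hR, hRv⟩ := h'.exists_card hv1 hvd
  refine ⟨R, hR, hRv, (eq_of_subset_of_card_le (insert_subset hR hsub) ?_).symm⟩
  rw [card_insert_of_notMem (h.notMem_erase_of_card_eq hv hRv), card_erase_add_one hv,
    h.card_eq, h'.card_eq]

theorem exists_neighbours (h : IsFlag d c) (hv : v ∈ c) (hvd : v ≠ d) :
    ∃ E G, E ⊆ G ∧ (E = ∅ ∨ E ∈ c.erase v) ∧ #E + 1 = #v ∧ G ∈ c.erase v ∧ #G = #v + 1 := by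
  have hlt : #v < #d := card_lt_card (ssubset_of_subset_of_ne (h.subset v hv) hvd)
  have hv1 : 1 ≤ #v := (mem_Icc.1 (h.card_mem_Icc hv)).1
  have hmem : ∀ {F}, F ∈ c → #F ≠ #v → F ∈ c.erase v := fun hF hFv =>
    mem_erase.2 ⟨fun hFv' => hFv (by rw [hFv']), hF⟩
  obtain ⟨G, hGc, hG⟩ := h.exists_card (n := #v + 1) (by omega) hlt
  rcases Nat.lt_or_ge 1 #v with h2 | h1
  · obtain ⟨E, hEc, hE⟩ := h.exists_card (n := #v - 1) (by omega) (by omega)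
    exact ⟨E, G, h.subset_of_card_le hEc hGc (by omega), Or.inr (hmem hEc (by omega)), by omega,
      hmem hGc (by omega), hG⟩
  · exact ⟨∅, G, empty_subset G, Or.inl rfl, by rw [card_empty]; omega, hmem hGc (by omega), hG⟩

open Classical in
theorem filter_superset_erase_eq_image [Fintype α] (h : IsFlag d c) (hv : v ∈ c) (hEG : E ⊆ G)
    (hEc : E = ∅ ∨ E ∈ c.erase v) (hE : #E + 1 = #v) (hGc : G ∈ c.erase v) (hG : #G = #v + 1) :
    ({c' | IsFlag d c' ∧ c.erase v ⊆ c'} : Finset (Finset (Finset α))) =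
      (G \ E).image fun x => insert (insert x E) (c.erase v) := by
  have hEsub : ∀ {c'}, IsFlag d c' → c.erase v ⊆ c' → ∀ R ∈ c', #R = #v → E ⊆ R := by
    rintro c' h' hsub R hR hRv
    rcases hEc with rfl | hEc
    · exact empty_subset R
    · exact h'.subset_of_card_le (hsub hEc) hR (by omega)
  have hlow : ∀ F ∈ c, #F < #v → F ⊆ E := by
    intro F hF hFv
    have := card_pos.2 (h.nonempty F hF)
    rcases hEc with rfl | hEc
    · rw [card_empty] at hE
      omega
    · exact h.subset_of_card_le hF (mem_of_mem_erase hEc) (by omega)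
  ext c'
  simp only [mem_filter, mem_univ, true_and, mem_image, mem_sdiff]
  constructor
  · rintro ⟨h', hsub⟩
    obtain ⟨R, hR, hRv, rfl⟩ := h.exists_eq_insert_erase h' hv hsub
    obtain ⟨x, hxE, rfl⟩ := exists_eq_insert_iff.2 ⟨hEsub h' hsub R hR hRv, by omega⟩
    exact ⟨x, ⟨h'.subset_of_card_le hR (hsub hGc) (by omega) (mem_insert_self x E), hxE⟩, rfl⟩
  · rintro ⟨x, ⟨hxG, hxE⟩, rfl⟩
    have hxEG : insert x E ⊆ G := insert_subset hxG hEG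
    refine ⟨h.exchange hv (hxEG.trans (h.subset G (mem_of_mem_erase hGc)))
      (by rw [card_insert_of_notMem hxE]; omega)
      (fun F hF hFv => (hlow F hF hFv).trans (subset_insert x E))
      (fun F hF hvF => hxEG.trans (h.subset_of_card_le (mem_of_mem_erase hGc) hF (by omega))),
      subset_insert _ _⟩

open Classical in
theorem card_filter_superset_erase [Fintype α] (h : IsFlag d c) (hv : v ∈ c) (hvd : v ≠ d) :
    #{c' | IsFlag d c' ∧ c.erase v ⊆ c'} = 2 := by
  obtain ⟨E, G, hEG, hEc, hE, hGc, hG⟩ := h.exists_neighbours hv hvd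
  have hinj : Set.InjOn (fun x => insert (insert x E) (c.erase v)) (G \ E : Finset α) := by
    intro x hx y hy hxy
    have hxy : insert (insert x E) (c.erase v) = insert (insert y E) (c.erase v) := hxy
    have hmem : insert x E ∈ insert (insert y E) (c.erase v) := hxy ▸ mem_insert_self _ _
    have hxy' : insert x E = insert y E := by
      refine (mem_insert.1 hmem).resolve_right (h.notMem_erase_of_card_eq hv ?_)
      rw [card_insert_of_notMem (mem_sdiff.1 hx).2]
      omega
    have hx' : x ∈ insert y E := hxy' ▸ mem_insert_self x E
    exact (mem_insert.1 hx').resolve_right (mem_sdiff.1 hx).2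
  rw [h.filter_superset_erase_eq_image hv hEG hEc hE hGc hG, card_image_of_injOn hinj,
    card_sdiff_of_subset hEG]
  omega

end IsFlag

section
variable {α β : Type*} [DecidableEq α] [DecidableEq β] {c : Finset α} {S : Finset β}
  {lam : α → β} {s : β} {u v : α}

theorem image_erase_of_injOn (hinj : Set.InjOn lam c) (hv : v ∈ c) :
    (c.erase v).image lam = (c.image lam).erase (lam v) := by
  rw [erase_eq, image_sdiff_of_injOn hinj (singleton_subset_iff.2 hv), image_singleton, ← erase_eq]

theorem image_erase_eq_image (hu : u ∈ c) (huv : u ≠ v) (h : lam u = lam v) :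
    (c.erase v).image lam = c.image lam := by
  refine (image_subset_image (erase_subset v c)).antisymm fun y hy => ?_
  obtain ⟨w, hw, rfl⟩ := mem_image.1 hy
  by_cases hwv : w = v
  · exact mem_image.2 ⟨u, mem_erase.2 ⟨huv, hu⟩, hwv ▸ h⟩
  · exact mem_image_of_mem lam (mem_erase.2 ⟨hwv, hw⟩)

theorem eq_or_eq_of_erase_subset_of_subset {X : Finset β} (h₁ : S.erase s ⊆ X) (h₂ : X ⊆ S) :
    X = S.erase s ∨ X = S := by
  by_cases hs : s ∈ X
  · exact Or.inr (h₂.antisymm fun y hy => by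
      by_cases hys : y = s
      · exact hys ▸ hs
      · exact h₁ (mem_erase.2 ⟨hys, hy⟩))
  · exact Or.inl ((subset_erase.2 ⟨h₂, hs⟩).antisymm h₁)

theorem filter_image_erase_eq_of_image_eq (hcS : #c = #S) (himg : c.image lam = S)
    (hv : v ∈ c) : {u ∈ c | (c.erase u).image lam = S.erase (lam v)} = {v} := by
  have hinj : Set.InjOn lam c := injOn_of_card_image_eq (by rw [himg, hcS])
  ext u
  simp only [mem_filter, mem_singleton]
  constructor
  · rintro ⟨hu, hdoor⟩
    rw [image_erase_of_injOn hinj hu, himg,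
      erase_inj S (himg ▸ mem_image_of_mem lam hu)] at hdoor
    exact hinj hu hv hdoor
  · rintro rfl
    exact ⟨hv, by rw [image_erase_of_injOn hinj hv, himg]⟩

theorem card_filter_image_erase_eq_of_image_eq_erase (hs : s ∈ S) (hcS : #c = #S)
    (himg : c.image lam = S.erase s) : #{v ∈ c | (c.erase v).image lam = S.erase s} = 2 := by
  have hlt : #(c.image lam) < #c := by
    rw [himg, hcS]
    exact card_erase_lt_of_mem hs
  obtain ⟨a, ha, b, hb, hab, hlab⟩ :=
    exists_ne_map_eq_of_card_lt_of_maps_to hlt fun x hx => mem_image_of_mem lam hx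
  have hinj : Set.InjOn lam (c.erase a) := injOn_of_card_image_eq (by
    rw [image_erase_eq_image hb (Ne.symm hab) hlab.symm, card_erase_of_mem ha, himg,
      card_erase_of_mem hs, hcS])
  rw [card_eq_two]
  refine ⟨a, b, hab, ?_⟩
  ext v
  simp only [mem_filter, mem_insert, mem_singleton, ← himg]
  constructor
  · rintro ⟨hv, hdoor⟩
    by_contra! hvab
    obtain ⟨u, hu, huv⟩ := mem_image.1 (hdoor ▸ mem_image_of_mem lam hv : lam v ∈ _)
    obtain ⟨huv', huc⟩ := mem_erase.1 hu
    by_cases hua : u = a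
    · exact hvab.2 (hinj (mem_erase.2 ⟨hvab.1, hv⟩) (mem_erase.2 ⟨Ne.symm hab, hb⟩)
        (by rw [← huv, hua, hlab]))
    · exact huv' (hinj (mem_erase.2 ⟨hua, huc⟩) (mem_erase.2 ⟨hvab.1, hv⟩) huv)
  · rintro (rfl | rfl)
    · exact ⟨ha, image_erase_eq_image hb (Ne.symm hab) hlab.symm⟩
    · exact ⟨hb, image_erase_eq_image ha hab hlab⟩

theorem card_filter_image_erase_eq_mod_two (hs : s ∈ S) (hcS : #c = #S)
    (himg : c.image lam ⊆ S) :
    (#{v ∈ c | (c.erase v).image lam = S.erase s} : ZMod 2) =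
      if c.image lam = S then 1 else 0 := by
  by_cases hA : c.image lam = S
  · obtain ⟨v, hv, rfl⟩ := mem_image.1 (hA ▸ hs)
    rw [if_pos hA, filter_image_erase_eq_of_image_eq hcS hA hv, card_singleton, Nat.cast_one]
  rw [if_neg hA]
  by_cases hB : c.image lam = S.erase s
  · rw [card_filter_image_erase_eq_of_image_eq_erase hs hcS hB]
    rfl
  · rw [filter_false_of_mem fun v hv hdoor => ?_, card_empty, Nat.cast_zero]
    have := hdoor ▸ image_subset_image (erase_subset v c)
    exact (eq_or_eq_of_erase_subset_of_subset this himg).elim hB hA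

end

theorem sum_card_filter_erase_eq_sum_card_filter_superset {α : Type*} [DecidableEq α]
    [Fintype α] {C : Finset (Finset α)} {n : ℕ} (hC : ∀ c ∈ C, #c = n) (P : Finset α → Prop)
    [DecidablePred P] :
    ∑ c ∈ C, #{v ∈ c | P (c.erase v)} =
      ∑ f ∈ ({f | #f + 1 = n ∧ P f} : Finset (Finset α)), #{c ∈ C | f ⊆ c} := by
  have h := sum_card_bipartiteAbove_eq_sum_card_bipartiteBelow (s := C)
      (t := ({f | #f + 1 = n ∧ P f} : Finset (Finset α))) (r := fun c f => f ⊆ c)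
  simp only [bipartiteAbove, bipartiteBelow] at h
  rw [← h]
  refine sum_congr rfl fun c hc => ?_
  refine card_nbij (c.erase ·) (fun v hv => ?_) (c.erase_injOn.mono fun v hv => ?_)
    (fun f hf => ?_)
  · obtain ⟨hvc, hP⟩ := mem_filter.1 hv
    simp only [coe_filter, Set.mem_ofPred_eq, mem_filter, mem_univ, true_and]
    exact ⟨⟨by rw [card_erase_add_one hvc, hC c hc], hP⟩, erase_subset v c⟩
  · exact (mem_filter.1 hv).1
  · simp only [coe_filter, Set.mem_ofPred_eq, mem_filter, mem_univ, true_and] at hf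
    obtain ⟨⟨hfn, hP⟩, hfc⟩ := hf
    obtain ⟨v, hvf, rfl⟩ := exists_eq_insert_iff.2 ⟨hfc, hfn.trans (hC _ hc).symm⟩
    exact ⟨v, mem_filter.2 ⟨mem_insert_self v f, by rwa [erase_insert hvf]⟩, erase_insert hvf⟩

section

variable {ι E : Type*} [SeminormedAddCommGroup E] [NormedSpace ℝ E] {T T' : Finset ι} {p : ι → E}

theorem Convex.inv_card_smul_sum_mem {s : Set E} (hs : Convex ℝ s) (hT : T.Nonempty)
    (hp : ∀ i ∈ T, p i ∈ s) : (#T : ℝ)⁻¹ • ∑ i ∈ T, p i ∈ s := by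
  have hT' : (#T : ℝ) ≠ 0 := Nat.cast_ne_zero.2 hT.card_pos.ne'
  rw [smul_sum]
  exact hs.sum_mem (fun _ _ => by positivity) (by rw [sum_const, nsmul_eq_mul, mul_inv_cancel₀ hT'])
    hp

theorem norm_inv_card_smul_sum_sub_le [DecidableEq ι] (hT : T.Nonempty) (hTT' : T ⊆ T') {D : ℝ}
    (hD : ∀ x ∈ T', ∀ y ∈ T', ‖p x - p y‖ ≤ D) :
    ‖(#T' : ℝ)⁻¹ • ∑ i ∈ T', p i - (#T : ℝ)⁻¹ • ∑ i ∈ T, p i‖ ≤ (1 - (#T' : ℝ)⁻¹) * D := by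
  generalize hbdef : (#T : ℝ)⁻¹ • ∑ i ∈ T, p i = b
  have hcard : (#(T' \ T) : ℝ) + #T = #T' := by exact_mod_cast card_sdiff_add_card_eq_card hTT'
  have hT0 : (#T : ℝ) ≠ 0 := Nat.cast_ne_zero.2 hT.card_pos.ne'
  have hT'0 : (0 : ℝ) < #T' := Nat.cast_pos.2 (hT.mono hTT').card_pos
  have key : (#T' : ℝ)⁻¹ • ∑ i ∈ T', p i - b = (#T' : ℝ)⁻¹ • ∑ x ∈ T' \ T, (p x - b) := by
    have hsumT : ∑ i ∈ T, p i = (#T : ℝ) • b := by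
      rw [← hbdef, smul_smul, mul_inv_cancel₀ hT0, one_smul]
    rw [sum_sub_distrib, sum_const, ← Nat.cast_smul_eq_nsmul ℝ, ← sum_sdiff hTT', hsumT,
      ← hcard]
    have hinv : (#T' : ℝ)⁻¹ * #T' = 1 := inv_mul_cancel₀ hT'0.ne'
    rw [← hcard] at hinv
    linear_combination (norm := module) hinv • b
  have hb : ∀ x ∈ T', ‖p x - b‖ ≤ D := fun x hx => by
    have hmem : b ∈ Metric.closedBall (p x) D :=
      hbdef ▸ (convex_closedBall (p x) D).inv_card_smul_sum_mem hT fun y hy =>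
        mem_closedBall_iff_norm'.2 (hD x hx y (hTT' hy))
    rwa [← dist_eq_norm, dist_comm]
  have hcard' : (#(T' \ T) : ℝ) ≤ #T' - 1 := by
    have : (1 : ℝ) ≤ #T := by exact_mod_cast hT.card_pos
    linarith
  calc ‖(#T' : ℝ)⁻¹ • ∑ i ∈ T', p i - b‖
      ≤ (#T' : ℝ)⁻¹ * ∑ x ∈ T' \ T, ‖p x - b‖ := by
        rw [key, norm_smul, Real.norm_of_nonneg (inv_nonneg.2 hT'0.le)]
        gcongr
        exact norm_sum_le _ _
    _ ≤ (#T' : ℝ)⁻¹ * (#(T' \ T) * D) := by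
        gcongr
        exact (sum_le_sum fun x hx => hb x (mem_sdiff.1 hx).1).trans_eq (by simp)
    _ ≤ (#T' : ℝ)⁻¹ * ((#T' - 1) * D) := by
        have : 0 ≤ D := (norm_nonneg _).trans (hb _ (hTT' hT.choose_spec))
        gcongr
    _ = (1 - (#T' : ℝ)⁻¹) * D := by field_simp

end

open Topology in
theorem exists_iInter_nonempty_of_forall_exists_dist_lt {X P ι : Type*} [PseudoMetricSpace X]
    [Finite P] {K : Set X} (hK : IsCompact K) {C : P → ι → Set X} (hC : ∀ p j, IsClosed (C p j))
    (h : ∀ ε > 0, ∃ p, ∃ y ∈ K, ∀ j, ∃ x ∈ C p j, dist x y < ε) :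
    ∃ p, (⋂ j, C p j).Nonempty := by
  by_contra! hempty
  have hleb : ∀ p, ∀ᶠ ε in 𝓝[>] (0 : ℝ), ∀ y ∈ K, ∃ j, Metric.ball y ε ⊆ (C p j)ᶜ := by
    intro p
    obtain ⟨δ, hδ, hball⟩ := lebesgue_number_lemma_of_metric hK (fun j => (hC p j).isOpen_compl)
      (by rw [← Set.compl_iInter, hempty p, Set.compl_empty]; exact Set.subset_univ K)
    filter_upwards [Ioo_mem_nhdsGT hδ] with ε hε y hy
    obtain ⟨j, hj⟩ := hball y hy
    exact ⟨j, (Metric.ball_subset_ball hε.2.le).trans hj⟩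
  obtain ⟨ε, hball, hε⟩ := ((Filter.eventually_all.2 hleb).and self_mem_nhdsWithin).exists
  obtain ⟨p, y, hy, hclose⟩ := h ε hε
  obtain ⟨j, hj⟩ := hball p y hy
  obtain ⟨x, hx, hxy⟩ := hclose j
  exact hj (Metric.mem_ball.2 hxy) hx

theorem face_mono {k : ℕ} {S T : Finset (Fin k)} (h : S ⊆ T) : face S ⊆ face T :=
  fun _ hx => ⟨hx.1, fun j hj => hx.2 j fun hjS => hj (h hjS)⟩

theorem convex_face {k : ℕ} (S : Finset (Fin k)) : Convex ℝ (face S) := by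
  intro x hx y hy a b ha hb hab
  exact ⟨convex_stdSimplex ℝ (Fin k) hx.1 hy.1 ha hb hab, fun j hj => by
    simp [hx.2 j hj, hy.2 j hj]⟩

theorem single_mem_face {k : ℕ} (j : Fin k) : Pi.single j 1 ∈ face {j} :=
  ⟨single_mem_stdSimplex ℝ j, fun _ hi => Pi.single_eq_of_ne (by simpa using hi) 1⟩

namespace BarycentricSubdivision

/- `Vertex k N` encodes the vertices of the `N`-th barycentric subdivision of `Δ^{k-1}`: a vertex of
the next subdivision is a set of vertices of the current one, standing for their barycenter `pos`.
`IsCell k N S c` says that `c` is the vertex set of a top-dimensional simplex of the subdivision of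
the face spanned by `S`; the cells of the next subdivision inside `c` are the flags of `c`. -/
@[reducible]
def Vertex (k : ℕ) : ℕ → Type
  | 0 => Fin k
  | N + 1 => Finset (Vertex k N)

instance instDecidableEqVertex (k : ℕ) : ∀ N, DecidableEq (Vertex k N)
  | 0 => inferInstanceAs (DecidableEq (Fin k))
  | N + 1 => @Finset.decidableEq _ (instDecidableEqVertex k N)

noncomputable instance instFintypeVertex (k : ℕ) : ∀ N, Fintype (Vertex k N)
  | 0 => inferInstanceAs (Fintype (Fin k))
  | N + 1 => @Finset.fintype _ (instFintypeVertex k N)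

noncomputable def pos (k : ℕ) : ∀ N, Vertex k N → Fin k → ℝ
  | 0, j => Pi.single j 1
  | N + 1, T => (#T : ℝ)⁻¹ • ∑ v ∈ T, pos k N v

def support (k : ℕ) : ∀ N, Vertex k N → Finset (Fin k)
  | 0, j => {j}
  | N + 1, T => T.sup (support k N)

def IsCell (k : ℕ) : ∀ N, Finset (Fin k) → Finset (Vertex k N) → Prop
  | 0, S, c => c = S
  | N + 1, S, c => ∃ d, IsCell k N S d ∧ IsFlag d c

variable {k N : ℕ} {S T : Finset (Fin k)}

theorem sup_support_zero (t : Finset (Fin k)) : t.sup (support k 0) = t :=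
  sup_singleton_eq_self t

namespace IsCell

theorem card_eq : ∀ {N} {c : Finset (Vertex k N)}, IsCell k N S c → #c = #S
  | 0, _, rfl => rfl
  | _ + 1, _, ⟨_, hd, hf⟩ => hf.card_eq.trans hd.card_eq

theorem sup_support : ∀ {N} {c : Finset (Vertex k N)}, IsCell k N S c → c.sup (support k N) = S
  | 0, _, rfl => sup_support_zero S
  | _ + 1, _, ⟨_, hd, hf⟩ => (hf.sup_sup _).trans hd.sup_support

theorem support_subset {c : Finset (Vertex k N)} (hc : IsCell k N S c) {v : Vertex k N}
    (hv : v ∈ c) : support k N v ⊆ S :=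
  hc.sup_support ▸ le_sup (f := support k N) hv

theorem support_nonempty : ∀ {N S} {c : Finset (Vertex k N)}, IsCell k N S c →
    ∀ {v}, v ∈ c → (support k N v).Nonempty
  | 0, _, _, _, v, _ => singleton_nonempty v
  | _ + 1, _, _, ⟨_, hd, hf⟩, _, hv => by
    obtain ⟨w, hw⟩ := hf.nonempty _ hv
    exact (hd.support_nonempty (hf.subset _ hv hw)).mono (le_sup (f := support k _) hw)

theorem pos_mem_face : ∀ {N S} {c : Finset (Vertex k N)}, IsCell k N S c →
    ∀ {v}, v ∈ c → pos k N v ∈ face (support k N v)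
  | 0, _, _, _, v, _ => single_mem_face v
  | _ + 1, _, _, ⟨_, hd, hf⟩, _, hv =>
    (convex_face _).inv_card_smul_sum_mem (hf.nonempty _ hv) fun _ hw =>
      face_mono (le_sup (f := support k _) hw) (hd.pos_mem_face (hf.subset _ hv hw))

end IsCell

theorem isCell_empty_iff {c : Finset (Vertex k N)} : IsCell k N ∅ c ↔ c = ∅ := by
  refine ⟨fun hc => card_eq_zero.1 hc.card_eq, ?_⟩
  rintro rfl
  induction N with
  | zero => rfl
  | succ N ih => exact ⟨∅, ih, rfl, by simp, by simp, by simp⟩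

open Classical in
noncomputable def cells (k N : ℕ) (S : Finset (Fin k)) : Finset (Finset (Vertex k N)) :=
  {c | IsCell k N S c}

@[simp]
theorem mem_cells {c : Finset (Vertex k N)} : c ∈ cells k N S ↔ IsCell k N S c := by
  simp [cells]

theorem card_cellsContaining_flag {e : Finset (Vertex k N)} {f : Finset (Finset (Vertex k N))}
    (hf : IsFlag e f) (he : #e + 1 = #S) :
    #{c ∈ cells k (N + 1) S | f ⊆ c} = #{d ∈ cells k N S | e ⊆ d} := by
  symm
  refine card_nbij (insert · f) (fun d hd => ?_) (fun d₁ hd₁ d₂ _ h => ?_) (fun c hc => ?_)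
  · obtain ⟨hd, hed⟩ := mem_filter.1 hd
    rw [mem_cells] at hd
    exact mem_filter.2 ⟨mem_cells.2 ⟨d, hd, hf.insert_top hed (he.trans hd.card_eq.symm)⟩,
      subset_insert d f⟩
  · obtain ⟨hd₁, -⟩ := mem_filter.1 hd₁
    have hd₁f : d₁ ∉ f := hf.notMem_of_card_lt (by rw [(mem_cells.1 hd₁).card_eq]; omega)
    have : d₁ ∈ insert d₂ f := by
      rw [← show insert d₁ f = insert d₂ f from h]
      exact mem_insert_self d₁ f
    exact (mem_insert.1 this).resolve_right hd₁f
  · obtain ⟨hc, hfc⟩ := mem_filter.1 hc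
    obtain ⟨d, hd, hcd⟩ := mem_cells.1 hc
    refine ⟨d, mem_filter.2 ⟨mem_cells.2 hd, hcd.subset_of_subset hf hfc⟩, ?_⟩
    exact (hcd.eq_insert_top hf hfc (he.trans hd.card_eq.symm)).symm

theorem card_cellsContaining_of_isCell : ∀ {N} {f : Finset (Vertex k N)}, IsCell k N T f →
    T ⊆ S → #T + 1 = #S → #{c ∈ cells k N S | f ⊆ c} = 1
  | 0, _, rfl, hTS, _ => by
    rw [card_eq_one]
    refine ⟨S, ext fun c => ?_⟩
    simp only [mem_filter, mem_cells (N := 0), mem_singleton]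
    exact ⟨And.left, fun hc => ⟨hc, hc ▸ hTS⟩⟩
  | _ + 1, _, ⟨e, he, hef⟩, hTS, hcard => by
    rw [card_cellsContaining_flag hef (he.card_eq ▸ hcard)]
    exact card_cellsContaining_of_isCell he hTS hcard

theorem card_cellsContaining_erase_of_ne {d : Finset (Vertex k N)}
    {c : Finset (Finset (Vertex k N))} {v : Finset (Vertex k N)} (hd : IsCell k N S d)
    (hc : IsFlag d c) (hv : v ∈ c) (hvd : v ≠ d) :
    #{c' ∈ cells k (N + 1) S | c.erase v ⊆ c'} = 2 := by
  classical
  rw [← hc.card_filter_superset_erase hv hvd]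
  congr 1
  ext c'
  simp only [mem_filter, mem_cells (N := N + 1), mem_univ, true_and]
  constructor
  · rintro ⟨⟨d', hd', hc'⟩, hsub⟩
    have hdc : d ∈ c.erase v :=
      mem_erase.2 ⟨Ne.symm hvd, hc.top_mem ((hc.nonempty v hv).mono (hc.subset v hv))⟩
    have hdd' : d = d' := eq_of_subset_of_card_le (hc'.subset d (hsub hdc))
      (by rw [hd.card_eq, hd'.card_eq])
    exact ⟨hdd' ▸ hc', hsub⟩
  · rintro ⟨hc', hsub⟩
    exact ⟨⟨d, hd, hc'⟩, hsub⟩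

theorem IsCell.facet_dichotomy : ∀ {N S} {c : Finset (Vertex k N)}, IsCell k N S c →
    ∀ {v}, v ∈ c →
      ((c.erase v).sup (support k N) = S ∧ #{c' ∈ cells k N S | c.erase v ⊆ c'} = 2) ∨
        IsCell k N ((c.erase v).sup (support k N)) (c.erase v)
  | 0, _, _, rfl, _, _ => Or.inr (sup_support_zero _).symm
  | _ + 1, _, c, ⟨d, hd, hc⟩, v, hv => by
    by_cases hvd : v = d
    · rw [hvd] at hv ⊢
      obtain ⟨e, hed, he, hce⟩ := hc.erase_top (hc.nonempty d hv)
      obtain ⟨w, hwe, rfl⟩ := exists_eq_insert_iff.2 ⟨hed, he⟩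
      have hfacet := hd.facet_dichotomy (mem_insert_self w e)
      rw [erase_insert hwe] at hfacet
      rw [show (c.erase (insert w e)).sup (support k _) = e.sup (support k _) from hce.sup_sup _,
        card_cellsContaining_flag hce (hd.card_eq ▸ he)]
      exact hfacet.imp_right fun he => ⟨e, he, hce⟩
    · have hdc : d ∈ c.erase v :=
        mem_erase.2 ⟨Ne.symm hvd, hc.top_mem ((hc.nonempty v hv).mono (hc.subset v hv))⟩
      refine Or.inl ⟨le_antisymm ?_ ?_, card_cellsContaining_erase_of_ne hd hc hv hvd⟩
      · exact (sup_mono (erase_subset v c)).trans ((hc.sup_sup _).trans hd.sup_support).le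
      · exact hd.sup_support ▸ le_sup (f := support k _) hdc

def IsSpernerLabeling (lam : Vertex k N → Fin k) : Prop :=
  ∀ S c, IsCell k N S c → ∀ v ∈ c, lam v ∈ support k N v

noncomputable def rainbowCells (k N : ℕ) (S : Finset (Fin k)) (lam : Vertex k N → Fin k) :
    Finset (Finset (Vertex k N)) :=
  {c ∈ cells k N S | c.image lam = S}

variable {lam : Vertex k N → Fin k}

namespace IsSpernerLabeling

theorem image_subset (hlam : IsSpernerLabeling lam) {c : Finset (Vertex k N)}
    (hc : IsCell k N S c) : c.image lam ⊆ S :=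
  image_subset_iff.2 fun v hv => hc.support_subset hv (hlam S c hc v hv)

theorem card_cellsContaining_mod_two (hlam : IsSpernerLabeling lam) {s : Fin k} (hs : s ∈ S)
    {f : Finset (Vertex k N)} (hf : #f + 1 = #S) (himg : f.image lam = S.erase s) :
    (#{c ∈ cells k N S | f ⊆ c} : ZMod 2) =
      if f ∈ rainbowCells k N (S.erase s) lam then 1 else 0 := by
  by_cases hbdry : IsCell k N (S.erase s) f
  · rw [if_pos (show f ∈ rainbowCells k N _ lam from mem_filter.2 ⟨mem_cells.2 hbdry, himg⟩),
      card_cellsContaining_of_isCell hbdry (erase_subset s S) (card_erase_add_one hs),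
      Nat.cast_one]
  rw [if_neg fun (h : f ∈ rainbowCells k N _ lam) => hbdry (mem_cells.1 (mem_filter.1 h).1)]
  obtain hnone | ⟨c, hc⟩ := (filter (f ⊆ ·) (cells k N S)).eq_empty_or_nonempty
  · rw [hnone, card_empty, Nat.cast_zero]
  obtain ⟨hc, hfc⟩ := mem_filter.1 hc
  replace hc := mem_cells.1 hc
  obtain ⟨v, hvf, rfl⟩ := exists_eq_insert_iff.2 ⟨hfc, hc.card_eq ▸ hf⟩
  have hfacet := hc.facet_dichotomy (mem_insert_self v f)
  rw [erase_insert hvf] at hfacet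
  rcases hfacet with ⟨-, h2⟩ | hT
  · rw [h2]
    rfl
  -- a boundary facet carries all labels of `S.erase s`, so it is a cell of that face
  refine absurd ?_ hbdry
  convert hT
  refine eq_of_subset_of_card_le (fun j hj => ?_) ?_
  · obtain ⟨w, hw, rfl⟩ := mem_image.1 (himg ▸ hj)
    exact le_sup (f := support k N) hw (hlam _ _ hT w hw)
  · rw [← hT.card_eq, ← Nat.add_le_add_iff_right, hf, card_erase_add_one hs]

theorem card_rainbowCells_erase (hlam : IsSpernerLabeling lam) {s : Fin k} (hs : s ∈ S) :
    (#(rainbowCells k N S lam) : ZMod 2) = #(rainbowCells k N (S.erase s) lam) := by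
  calc (#(rainbowCells k N S lam) : ZMod 2)
      = ∑ c ∈ cells k N S, if c.image lam = S then 1 else 0 := by
        rw [rainbowCells, sum_boole]
    _ = ∑ c ∈ cells k N S, (#{v ∈ c | (c.erase v).image lam = S.erase s} : ZMod 2) :=
        sum_congr rfl fun c hc => (card_filter_image_erase_eq_mod_two hs
          (mem_cells.1 hc).card_eq (hlam.image_subset (mem_cells.1 hc))).symm
    _ = ∑ f ∈ ({f | #f + 1 = #S ∧ f.image lam = S.erase s} : Finset _),
          (#{c ∈ cells k N S | f ⊆ c} : ZMod 2) := by
        rw [← Nat.cast_sum, ← Nat.cast_sum, sum_card_filter_erase_eq_sum_card_filter_superset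
          (fun c hc => (mem_cells.1 hc).card_eq) (fun f => f.image lam = S.erase s)]
    _ = ∑ f ∈ ({f | #f + 1 = #S ∧ f.image lam = S.erase s} : Finset _),
          if f ∈ rainbowCells k N (S.erase s) lam then 1 else 0 :=
        sum_congr rfl fun f hf =>
          hlam.card_cellsContaining_mod_two hs (mem_filter.1 hf).2.1 (mem_filter.1 hf).2.2
    _ = #(rainbowCells k N (S.erase s) lam) := by
        rw [sum_boole, filter_mem_eq_inter, inter_eq_right.2 fun c hc => ?_]
        obtain ⟨hc, himg⟩ := mem_filter.1 hc
        simp only [mem_filter, mem_univ, true_and]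
        exact ⟨by rw [(mem_cells.1 hc).card_eq, card_erase_add_one hs], himg⟩

theorem odd_card_rainbowCells (hlam : IsSpernerLabeling lam) (S : Finset (Fin k)) :
    Odd #(rainbowCells k N S lam) := by
  rw [← ZMod.natCast_eq_one_iff_odd]
  induction S using Finset.induction_on with
  | empty =>
    have : rainbowCells k N ∅ lam = {∅} := by
      ext c
      simp [rainbowCells, mem_cells (N := N), isCell_empty_iff]
    rw [this, card_singleton, Nat.cast_one]
  | insert s S hs ih =>
    rw [hlam.card_rainbowCells_erase (mem_insert_self s S), erase_insert hs, ih]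

end IsSpernerLabeling

theorem IsCell.norm_pos_sub_le : ∀ {N S} {c : Finset (Vertex k N)}, IsCell k N S c →
    ∀ {v w}, v ∈ c → w ∈ c → ‖pos k N v - pos k N w‖ ≤ (1 - (k : ℝ)⁻¹) ^ N
  | 0, _, _, _, v, w, _, _ => by
    rw [pow_zero]
    refine (pi_norm_le_iff_of_nonneg zero_le_one).2 fun i => ?_
    simp only [pos, Pi.sub_apply, Pi.single_apply]
    split_ifs <;> norm_num
  | N + 1, S, c, ⟨d, hd, hc⟩, v, w, hv, hw => by
    wlog hvw : v ⊆ w generalizing v w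
    · rw [norm_sub_rev]
      exact this w v hw hv ((hc.chain.total hv hw).resolve_left hvw)
    have hw0 : 0 < #w := card_pos.2 (hc.nonempty w hw)
    have hwk : #w ≤ k := calc
      #w ≤ #d := card_le_card (hc.subset w hw)
      _ = #S := hd.card_eq
      _ ≤ k := (card_le_univ S).trans_eq (Fintype.card_fin k)
    have hρ : 0 ≤ 1 - (k : ℝ)⁻¹ :=
      sub_nonneg.2 (inv_le_one_of_one_le₀ (by exact_mod_cast hw0.trans_le hwk))
    rw [norm_sub_rev, pow_succ']
    calc ‖pos k (N + 1) w - pos k (N + 1) v‖ ≤ (1 - (#w : ℝ)⁻¹) * (1 - (k : ℝ)⁻¹) ^ N :=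
          norm_inv_card_smul_sum_sub_le (hc.nonempty v hv) hvw fun x hx y hy =>
            hd.norm_pos_sub_le (hc.subset w hw hx) (hc.subset w hw hy)
      _ ≤ (1 - (k : ℝ)⁻¹) * (1 - (k : ℝ)⁻¹) ^ N := by gcongr

theorem exists_isSpernerLabeling (hk : 0 < k) (B : Vertex k N → Fin k → Set (Fin k → ℝ))
    (hB : ∀ v, IsKKM (B v)) :
    ∃ lam : Vertex k N → Fin k, IsSpernerLabeling lam ∧
      ∀ S c, IsCell k N S c → ∀ v ∈ c, pos k N v ∈ B v (lam v) := by
  have : ∀ v, ∃ j, ∀ S c, IsCell k N S c → v ∈ c → j ∈ support k N v ∧ pos k N v ∈ B v j := by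
    intro v
    by_cases h : ∃ S c, IsCell k N S c ∧ v ∈ c
    · obtain ⟨S, c, hc, hv⟩ := h
      obtain ⟨j, hj, hjB⟩ :=
        Set.mem_iUnion₂.1 (hB v _ (hc.support_nonempty hv) (hc.pos_mem_face hv))
      exact ⟨j, fun _ _ _ _ => ⟨hj, hjB⟩⟩
    · exact ⟨⟨0, hk⟩, fun S c hc hv => absurd ⟨S, c, hc, hv⟩ h⟩
  choose lam hlam using this
  exact ⟨lam, fun S c hc v hv => (hlam v S c hc hv).1, fun S c hc v hv => (hlam v S c hc hv).2⟩

theorem exists_perm_forall_exists_pos_mem (hk : 0 < k) {A : Fin k → Fin k → Set (Fin k → ℝ)}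
    (hA : ∀ i, IsKKM (A i)) (N : ℕ) :
    ∃ π : Equiv.Perm (Fin k), ∃ c, IsCell k (N + 1) univ c ∧
      ∀ j, ∃ v ∈ c, pos k (N + 1) v ∈ A (π j) j := by
  obtain ⟨lam, hlam, hmem⟩ := exists_isSpernerLabeling (N := N + 1) hk
    (fun v : Finset (Vertex k N) => A ⟨(#v - 1) % k, Nat.mod_lt _ hk⟩) fun _ => hA _
  obtain ⟨c, hc⟩ := card_pos.1 (hlam.odd_card_rainbowCells univ).pos
  obtain ⟨hcell, himg⟩ := mem_filter.1 hc
  replace hcell := mem_cells.1 hcell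
  choose v hv hlv using fun j => mem_image.1 (himg ▸ mem_univ j : j ∈ c.image lam)
  have hinj : Function.Injective fun j => (⟨(#(v j) - 1) % k, Nat.mod_lt _ hk⟩ : Fin k) := by
    obtain ⟨d, hd, hcd⟩ := hcell
    have hcard : ∀ j, (#(v j) - 1) % k + 1 = #(v j) := fun j => by
      obtain ⟨h1, h2⟩ := mem_Icc.1 (hcd.card_mem_Icc (hv j))
      rw [hd.card_eq, card_univ, Fintype.card_fin] at h2
      rw [Nat.mod_eq_of_lt (by omega)]
      omega
    intro i j hij
    have hij' : #(v i) = #(v j) := by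
      rw [← hcard i, ← hcard j, show (#(v i) - 1) % k = (#(v j) - 1) % k from congrArg Fin.val hij]
    rw [← hlv i, ← hlv j, hcd.eq_of_card_eq (hv i) (hv j) hij']
  exact ⟨Equiv.ofBijective _ (Finite.injective_iff_bijective.1 hinj), c, hcell,
    fun j => ⟨v j, hv j, by
      have h := hmem _ _ hcell _ (hv j)
      rw [hlv j] at h
      exact h⟩⟩

end BarycentricSubdivision

open BarycentricSubdivision in
theorem stmt7_general (k : ℕ) (A : Fin k → Fin k → Set (Fin k → ℝ))
    (hclosed : ∀ i j, IsClosed (A i j))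
    (hKKM : ∀ i, IsKKM (A i)) :
    ∃ π : Equiv.Perm (Fin k), (⋂ j, A (π j) j).Nonempty := by
  rcases k.eq_zero_or_pos with rfl | hk
  · exact ⟨1, by simp⟩
  have hρ : 1 - (k : ℝ)⁻¹ < 1 := sub_lt_self 1 (by positivity)
  refine exists_iInter_nonempty_of_forall_exists_dist_lt (isCompact_stdSimplex ℝ (Fin k))
    (fun π j => hclosed (π j) j) fun ε hε => ?_
  obtain ⟨N, hN⟩ := exists_pow_lt_of_lt_one hε hρ
  obtain ⟨π, c, hc, hπ⟩ := exists_perm_forall_exists_pos_mem hk hKKM N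
  obtain ⟨v₀, hv₀⟩ := card_pos.1 (hc.card_eq.trans (card_fin k) ▸ hk)
  refine ⟨π, pos k (N + 1) v₀, (hc.pos_mem_face hv₀).1, fun j => ?_⟩
  obtain ⟨v, hv, hvA⟩ := hπ j
  refine ⟨_, hvA, ?_⟩
  calc dist (pos k (N + 1) v) (pos k (N + 1) v₀) ≤ (1 - (k : ℝ)⁻¹) ^ (N + 1) :=
        (dist_eq_norm _ _).trans_le (hc.norm_pos_sub_le hv hv₀)
    _ ≤ (1 - (k : ℝ)⁻¹) ^ N := pow_le_pow_of_le_one (sub_nonneg.2 (inv_le_one_of_one_le₀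
        (by exact_mod_cast hk))) hρ.le N.le_succ
    _ < ε := hN

theorem stmt7 (k : ℕ) (hk : 0 < k) (A : Fin k → Fin k → Set (Fin k → ℝ))
    (hclosed : ∀ i j, IsClosed (A i j))
    (hKKM : ∀ i, IsKKM (A i)) :
    ∃ π : Equiv.Perm (Fin k), (⋂ j, A (π j) j).Nonempty :=
  stmt7_general k A hclosed hKKM
end

section
/- If (A_1, …, A_k) is a dual KKM cover of Δ^{k−1}, then the cyclically shifted tuple (A_2, A_3, …, A_k, A_1) is a KKM cover of Δ^{k−1}. -/
open Finset

/-! A point of the facet `F_i` whose other coordinates are all positive lies on no facet `F_m`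
with `m ≠ i`, so by the dual KKM condition the only set that can cover it is `A_i`. Such points
are dense in `F_i` and `A_i` is closed, hence `F_i ⊆ A_i`. Now a face `σ ≠ Δ` that is nonempty has
a vertex `v_j` with `v_{j+1} ∉ σ`, so `σ ⊆ F_{j+1} ⊆ A_{j+1}`, while `Δ` itself is covered by all
the `A_j`. -/

namespace Fin

open Fin.NatCast in
theorem eq_univ_of_forall_add_one_mem {k : ℕ} [NeZero k] {S : Finset (Fin k)} (hS : S.Nonempty)
    (hadd : ∀ j ∈ S, j + 1 ∈ S) : S = univ := by
  obtain ⟨s, hs⟩ := hS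
  have hiter : ∀ n : ℕ, s + (n : Fin k) ∈ S := by
    intro n
    induction n with
    | zero => simpa using hs
    | succ n ih => simpa [add_assoc] using hadd _ ih
  refine eq_univ_of_forall fun t => ?_
  simpa [Fin.cast_val_eq_self] using hiter (t - s).val

end Fin

theorem exists_mem_face_forall_pos {k : ℕ} {S : Finset (Fin k)} (hS : S.Nonempty) :
    ∃ b ∈ face S, ∀ j ∈ S, 0 < b j := by
  have hcard : (0 : ℝ) < #S := by exact_mod_cast hS.card_pos
  refine ⟨fun j => if j ∈ S then (#S : ℝ)⁻¹ else 0, ⟨⟨fun j => ?_, ?_⟩, fun j hj => ?_⟩,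
    fun j hj => ?_⟩
  · dsimp only; split_ifs <;> positivity
  · rw [sum_ite_mem, univ_inter, sum_const, nsmul_eq_mul, mul_inv_cancel₀ hcard.ne']
  · simp [hj]
  · simp [hj, hcard]

namespace IsDualKKM

variable {k : ℕ} {A : Fin k → Set (Fin k → ℝ)}

theorem mem_of_mem_facet_of_pos (h : IsDualKKM A) {i : Fin k} {y : Fin k → ℝ}
    (hy : y ∈ facet i) (hpos : ∀ j ≠ i, 0 < y j) : y ∈ A i := by
  obtain ⟨m, hm⟩ := Set.mem_iUnion.mp (h.2.1 hy.1)
  rcases eq_or_ne m i with rfl | hmi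
  · exact hm
  · exact absurd (h.2.2 m i hmi ⟨hm, hy⟩).1.2 (hpos m hmi).ne'

theorem facet_subset (h : IsDualKKM A) (i : Fin k) : facet i ⊆ A i := by
  intro x hx
  obtain ⟨j, -, hxj⟩ := exists_ne_zero_of_sum_ne_zero (s := univ) (f := x)
    (by rw [hx.1.2]; exact one_ne_zero)
  have hji : j ≠ i := by rintro rfl; exact hxj hx.2
  obtain ⟨b, hb, hbpos⟩ := exists_mem_face_forall_pos (S := univ.erase i) ⟨j, by simp [hji]⟩
  have hb_facet : b ∈ facet i := ⟨hb.1, hb.2 i (notMem_erase i univ)⟩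
  have hseg : openSegment ℝ x b ⊆ A i := by
    rintro _ ⟨s, t, hs, ht, hst, rfl⟩
    refine h.mem_of_mem_facet_of_pos ⟨?_, ?_⟩ fun j hj => ?_
    · exact convex_stdSimplex ℝ (Fin k) hx.1 hb_facet.1 hs.le ht.le hst
    · simp [hx.2, hb_facet.2]
    · have hxj := hx.1.1 j
      have hbj := hbpos j (mem_erase.mpr ⟨hj, mem_univ j⟩)
      simp only [Pi.add_apply, Pi.smul_apply, smul_eq_mul]
      positivity
  exact closure_minimal hseg (h.1 i).1
    (segment_subset_closure_openSegment (left_mem_segment ℝ x b))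

end IsDualKKM

theorem stmt9 (k : ℕ) [NeZero k] (A : Fin k → Set (Fin k → ℝ))
    (hdual : IsDualKKM A) :
    IsKKM (fun j => A (j + 1)) := by
  intro S hS x hx
  by_cases hcyc : ∀ j ∈ S, j + 1 ∈ S
  · obtain ⟨i, hi⟩ := Set.mem_iUnion.mp (hdual.2.1 hx.1)
    refine Set.mem_biUnion (Fin.eq_univ_of_forall_add_one_mem hS hcyc ▸ mem_univ (i - 1)) ?_
    simpa using hi
  · push Not at hcyc
    obtain ⟨j, hj, hj1⟩ := hcyc
    exact Set.mem_biUnion hj (hdual.facet_subset (j + 1) ⟨hx.1, hx.2 (j + 1) hj1⟩)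
end

section
/- Sparse KKM for k = 2 (moving knife): let n ≥ 2, and for each i ∈ [n] let A^i_1, A^i_2 be closed subsets of [0,1] such that for every set C ⊆ [n] of size n−1 we have 0 ∈ ⋃_{i∈C} A^i_2, 1 ∈ ⋃_{i∈C} A^i_1, and [0,1] = ⋃_{i∈C}(A^i_1 ∪ A^i_2). Then there exist distinct i₁, i₂ ∈ [n] and a point x ∈ [0,1] with x ∈ A^{i₁}_1 ∩ A^{i₂}_2. -/
open Finset

/-
Moving knife: let `t` be the largest cut at which some guest `i₂` accepts the right piece. Every cut
in `(t, b]` is accepted by a guest other than `i₂`, necessarily for the left piece; closedness carries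
this to `t` itself, which yields a guest `i₁ ≠ i₂` accepting the left piece at `t`.
-/

theorem IsClosed.left_mem_of_Ioc_subset {α : Type*} [TopologicalSpace α] [LinearOrder α]
    [OrderTopology α] [DenselyOrdered α] {F : Set α} (hF : IsClosed F) {a b : α} (hab : a ≤ b)
    (hb : b ∈ F) (h : Set.Ioc a b ⊆ F) : a ∈ F := by
  rcases hab.eq_or_lt with rfl | hlt
  · exact hb
  · exact hF.closure_subset_iff.mpr h (by rw [closure_Ioc hlt.ne]; exact ⟨le_rfl, hab⟩)

theorem exists_ne_mem_inter_of_forall_cover {ι : Type*} [Finite ι] {a b : ℝ} (A1 A2 : ι → Set ℝ)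
    (hA1 : ∀ i, IsClosed (A1 i)) (hA2 : ∀ i, IsClosed (A2 i)) (hA2_sub : ∀ i, A2 i ⊆ Set.Icc a b)
    (hA2_ne : (⋃ i, A2 i).Nonempty) (hb : ∀ i, b ∈ ⋃ (j) (_ : j ≠ i), A1 j)
    (hcover : ∀ i, Set.Icc a b ⊆ ⋃ (j) (_ : j ≠ i), (A1 j ∪ A2 j)) :
    ∃ i₁ i₂, i₁ ≠ i₂ ∧ ∃ x ∈ Set.Icc a b, x ∈ A1 i₁ ∩ A2 i₂ := by
  obtain ⟨t, ht, ht_max⟩ := (isCompact_iUnion fun i =>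
    isCompact_Icc.of_isClosed_subset (hA2 i) (hA2_sub i)).exists_isGreatest hA2_ne
  obtain ⟨i₂, hti₂⟩ := Set.mem_iUnion.mp ht
  have htab := hA2_sub i₂ hti₂
  have hknife : Set.Ioc t b ⊆ ⋃ (j) (_ : j ≠ i₂), A1 j := by
    intro x hx
    obtain ⟨j, hj, hxj⟩ := Set.mem_iUnion₂.mp (hcover i₂ ⟨htab.1.trans hx.1.le, hx.2⟩)
    refine Set.mem_iUnion₂.mpr ⟨j, hj, hxj.resolve_right fun hx₂ => ?_⟩
    exact (ht_max (Set.mem_iUnion.mpr ⟨j, hx₂⟩)).not_gt hx.1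
  have hclosed : IsClosed (⋃ (j) (_ : j ≠ i₂), A1 j) :=
    isClosed_iUnion_of_finite fun j => isClosed_iUnion_of_finite fun _ => hA1 j
  obtain ⟨i₁, hne, hti₁⟩ :=
    Set.mem_iUnion₂.mp (hclosed.left_mem_of_Ioc_subset htab.2 (hb i₂) hknife)
  exact ⟨i₁, i₂, hne, t, htab, hti₁, hti₂⟩

theorem stmt15_general (n : ℕ)
    (A1 A2 : Fin n → Set ℝ)
    (hclosed : ∀ i, IsClosed (A1 i) ∧ IsClosed (A2 i) ∧
      A1 i ⊆ Set.Icc 0 1 ∧ A2 i ⊆ Set.Icc 0 1)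
    (hweak : ∀ C : Finset (Fin n), C.card = n - 1 →
      (0 : ℝ) ∈ ⋃ i ∈ C, A2 i ∧ (1 : ℝ) ∈ ⋃ i ∈ C, A1 i ∧
      Set.Icc (0 : ℝ) 1 ⊆ ⋃ i ∈ C, (A1 i ∪ A2 i)) :
    ∃ i₁ i₂ : Fin n, i₁ ≠ i₂ ∧ ∃ x ∈ Set.Icc (0 : ℝ) 1, x ∈ A1 i₁ ∩ A2 i₂ := by
  have herase : ∀ (i : Fin n) (B : Fin n → Set ℝ),
      ⋃ j ∈ univ.erase i, B j = ⋃ (j) (_ : j ≠ i), B j := by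
    intro i B; ext; simp
  have hcard : ∀ i : Fin n, (univ.erase i).card = n - 1 := by simp
  obtain ⟨C, -, hC⟩ := exists_subset_card_eq (s := (univ : Finset (Fin n))) (n := n - 1) (by simp)
  refine exists_ne_mem_inter_of_forall_cover A1 A2 (fun i => (hclosed i).1)
    (fun i => (hclosed i).2.1) (fun i => (hclosed i).2.2.2)
    ⟨0, Set.iUnion₂_subset_iUnion _ _ (hweak C hC).1⟩ (fun i => ?_) (fun i => ?_)
  · simpa only [herase] using (hweak _ (hcard i)).2.1
  · simpa only [herase] using (hweak _ (hcard i)).2.2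

theorem stmt15 (n : ℕ) (hn : 2 ≤ n)
    (A1 A2 : Fin n → Set ℝ)
    (hclosed : ∀ i, IsClosed (A1 i) ∧ IsClosed (A2 i) ∧
      A1 i ⊆ Set.Icc 0 1 ∧ A2 i ⊆ Set.Icc 0 1)
    (hweak : ∀ C : Finset (Fin n), C.card = n - 1 →
      (0 : ℝ) ∈ ⋃ i ∈ C, A2 i ∧ (1 : ℝ) ∈ ⋃ i ∈ C, A1 i ∧
      Set.Icc (0 : ℝ) 1 ⊆ ⋃ i ∈ C, (A1 i ∪ A2 i)) :
    ∃ i₁ i₂ : Fin n, i₁ ≠ i₂ ∧ ∃ x ∈ Set.Icc (0 : ℝ) 1, x ∈ A1 i₁ ∩ A2 i₂ :=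
  stmt15_general n A1 A2 hclosed hweak
end
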